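/- Let V be a finite-dimensional real vector space and L ⊆ 𝕋_ℂV a lagrangian subspace with L ∩ L̄ = 0. Let W ⊆ V be a subspace of codimension r, with inclusion ι : W → V and complexified inclusion ι_ℂ : W_ℂ → V_ℂ. Then the backward image ι^!L := {X + ξ∘ι_ℂ : X ∈ W_ℂ, ξ ∈ (V_ℂ)*, X + ξ ∈ L} ⊆ 𝕋_ℂW satisfies dim_ℂ(ι^!L ∩ conj(ι^!L)) ≤ r. -/

import Mathlib

open TensorProduct Module

noncomputable section

namespace CDirac


/-- The real generalized tangent space `V ⊕ V*`. -/
abbrev TR (V : Type*) [AddCommGroup V] [Module ℝ V] := V × (V →ₗ[ℝ] ℝ)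

variable {V : Type*} [AddCommGroup V] [Module ℝ V]

/-- The canonical pairing `⟨X+ξ, Y+η⟩ = (η X + ξ Y)/2` on `𝕋V`. -/
def pairR (a b : TR V) : ℝ := (b.2 a.1 + a.2 b.1) / 2

lemma pairR_add_left (a a' b : TR V) : pairR (a + a') b = pairR a b + pairR a' b := by
  simp only [pairR, Prod.fst_add, Prod.snd_add, map_add, LinearMap.add_apply]
  ring

lemma pairR_smul_left (c : ℝ) (a b : TR V) : pairR (c • a) b = c * pairR a b := by
  simp only [pairR, Prod.smul_fst, Prod.smul_snd, map_smul, LinearMap.smul_apply,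
    smul_eq_mul]
  ring

/-- Orthogonal complement with respect to the pairing on `𝕋V`. -/
def orthR (L : Submodule ℝ (TR V)) : Submodule ℝ (TR V) where
  carrier := {a | ∀ b ∈ L, pairR a b = 0}
  zero_mem' := fun b _ => by simp [pairR]
  add_mem' := fun {a a'} ha ha' b hb => by
    rw [pairR_add_left, ha b hb, ha' b hb, add_zero]
  smul_mem' := fun c a ha b hb => by rw [pairR_smul_left, ha b hb, mul_zero]

/-- A real lagrangian subspace: `L = L^⊥`. -/
def IsLagrangianR (L : Submodule ℝ (TR V)) : Prop := L = orthR L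

/-- An isotropic subspace of `𝕋V`. -/
def IsIsotropicR (K : Submodule ℝ (TR V)) : Prop := ∀ a ∈ K, ∀ b ∈ K, pairR a b = 0

/-- The quotient `K^⊥/K`. -/
abbrev quotK (K : Submodule ℝ (TR V)) :=
  @HasQuotient.Quotient _ _ (@Submodule.hasQuotient ℝ _ _ (orthR K).addCommGroup _)
    (K.comap (orthR K).subtype)

/-- The quotient map `K^⊥ → K^⊥/K`. -/
def mkK (K : Submodule ℝ (TR V)) : ↥(orthR K) →ₗ[ℝ] quotK K :=
  @Submodule.mkQ ℝ _ _ (orthR K).addCommGroup _ (K.comap (orthR K).subtype)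




/-- The complexification `V_ℂ = ℂ ⊗_ℝ V`. -/
abbrev Cx (V : Type*) [AddCommGroup V] [Module ℝ V] := ℂ ⊗[ℝ] V

/-- The complex dual `(V_ℂ)^*`. -/
abbrev DualC (V : Type*) [AddCommGroup V] [Module ℝ V] := Cx V →ₗ[ℂ] ℂ

/-- The complexified generalized tangent space `𝕋_ℂ V = V_ℂ ⊕ (V_ℂ)^*`. -/
abbrev TCx (V : Type*) [AddCommGroup V] [Module ℝ V] := Cx V × DualC V

/-- The ℂ-bilinear pairing on `𝕋_ℂ V`. -/
def pairC (a b : TCx V) : ℂ := (b.2 a.1 + a.2 b.1) / 2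

lemma pairC_add_left (a a' b : TCx V) : pairC (a + a') b = pairC a b + pairC a' b := by
  simp only [pairC, Prod.fst_add, Prod.snd_add, map_add, LinearMap.add_apply]
  ring

lemma pairC_smul_left (c : ℂ) (a b : TCx V) : pairC (c • a) b = c * pairC a b := by
  simp only [pairC, Prod.smul_fst, Prod.smul_snd, map_smul, LinearMap.smul_apply,
    smul_eq_mul]
  ring

/-- Orthogonal complement with respect to the ℂ-bilinear pairing on `𝕋_ℂ V`. -/
def orthC (L : Submodule ℂ (TCx V)) : Submodule ℂ (TCx V) where
  carrier := {a | ∀ b ∈ L, pairC a b = 0}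
  zero_mem' := fun b _ => by simp [pairC]
  add_mem' := fun {a a'} ha ha' b hb => by
    rw [pairC_add_left, ha b hb, ha' b hb, add_zero]
  smul_mem' := fun c a ha b hb => by rw [pairC_smul_left, ha b hb, mul_zero]

/-- A complex lagrangian subspace: `L = L^⊥`. -/
def IsLagrangianC (L : Submodule ℂ (TCx V)) : Prop := L = orthC L

private lemma conjCxAux_smul (z : ℂ) (x : Cx V) :
    TensorProduct.map Complex.conjAe.toLinearMap LinearMap.id (z • x) =
      starRingEnd ℂ z • TensorProduct.map Complex.conjAe.toLinearMap LinearMap.id x := by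
  induction x using TensorProduct.induction_on with
  | zero => simp
  | tmul w v => simp [smul_tmul', smul_eq_mul, Complex.conjAe_coe, map_mul]
  | add x y hx hy => simp only [smul_add, map_add, hx, hy]

/-- Conjugation on `V_ℂ`, as a `conj`-semilinear map. -/
def conjCx : Cx V →ₛₗ[starRingEnd ℂ] Cx V where
  toFun := TensorProduct.map Complex.conjAe.toLinearMap LinearMap.id
  map_add' := map_add _
  map_smul' := conjCxAux_smul

lemma conjCx_smul (z : ℂ) (x : Cx V) :
    conjCx (z • x) = starRingEnd ℂ z • conjCx x := conjCxAux_smul z x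

/-- Conjugation of a complex linear functional. -/
def conjDualFun (ξ : DualC V) : DualC V where
  toFun x := starRingEnd ℂ (ξ (conjCx x))
  map_add' x y := by simp
  map_smul' z x := by
    rw [conjCx_smul, map_smul, smul_eq_mul, map_mul, RingHom.id_apply]
    simp [smul_eq_mul]

/-- Conjugation on `(V_ℂ)^*`, as a `conj`-semilinear map. -/
def conjDual : DualC V →ₛₗ[starRingEnd ℂ] DualC V where
  toFun := conjDualFun
  map_add' ξ η := by ext x; simp [conjDualFun]
  map_smul' z ξ := by
    ext x
    simp [conjDualFun, smul_eq_mul, map_mul]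

/-- Conjugation on `𝕋_ℂ V`, as a `conj`-semilinear map. -/
def conjT : TCx V →ₛₗ[starRingEnd ℂ] TCx V where
  toFun a := (conjCx a.1, conjDual a.2)
  map_add' a b := by simp [Prod.ext_iff]
  map_smul' z a := by
    simp [Prod.ext_iff, Prod.smul_fst, Prod.smul_snd, map_smulₛₗ]

instance : RingHomSurjective (starRingEnd ℂ) :=
  ⟨fun z => ⟨starRingEnd ℂ z, by simp⟩⟩

/-- The conjugate `L̄` of a ℂ-subspace of `𝕋_ℂ V`. -/
def conjSub (L : Submodule ℂ (TCx V)) : Submodule ℂ (TCx V) := L.map conjT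

/-- The conjugate `Ē` of a ℂ-subspace of `V_ℂ`. -/
def conjE (E : Submodule ℂ (Cx V)) : Submodule ℂ (Cx V) := E.map conjCx

/-- The canonical inclusion `V → V_ℂ`, `v ↦ 1 ⊗ v`. -/
def iV : V →ₗ[ℝ] Cx V := TensorProduct.mk ℝ ℂ V 1





/-- ℝ-linear auxiliary version of the ℂ-linear extension of a real functional. -/
def dualExtAux (α : V →ₗ[ℝ] ℝ) : Cx V →ₗ[ℝ] ℂ :=
  TensorProduct.lift
    (LinearMap.mk₂ ℝ (fun z v => z * (α v : ℂ))
      (fun z w v => by push_cast; ring)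
      (fun r z v => by simp only [Complex.real_smul]; ring)
      (fun z v w => by push_cast [map_add]; ring)
      (fun r z v => by simp only [map_smul, smul_eq_mul, Complex.real_smul]; push_cast; ring))

private lemma dualExtAux_smulC (α : V →ₗ[ℝ] ℝ) (z : ℂ) (x : Cx V) :
    dualExtAux α (z • x) = z * dualExtAux α x := by
  induction x using TensorProduct.induction_on with
  | zero => simp
  | tmul w v =>
      simp only [dualExtAux, smul_tmul', lift.tmul, LinearMap.mk₂_apply, smul_eq_mul]
      ring
  | add x y hx hy => simp only [smul_add, map_add, hx, hy]; ring

/-- The ℂ-linear extension of a real functional `α : V → ℝ` to `V_ℂ`. -/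
def dualExtFun (α : V →ₗ[ℝ] ℝ) : DualC V where
  toFun := dualExtAux α
  map_add' := map_add _
  map_smul' z x := by simpa using dualExtAux_smulC α z x

private lemma dualExtFun_tmul (α : V →ₗ[ℝ] ℝ) (z : ℂ) (v : V) :
    dualExtFun α (z ⊗ₜ[ℝ] v) = z * (α v : ℂ) := by
  simp [dualExtFun, dualExtAux]

/-- The ℂ-linear extension map `V^* → (V_ℂ)^*`, as an ℝ-linear map. -/
def dualExt : (V →ₗ[ℝ] ℝ) →ₗ[ℝ] DualC V where
  toFun := dualExtFun
  map_add' α β := by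
    apply LinearMap.ext; intro x
    induction x using TensorProduct.induction_on with
    | zero => simp
    | tmul w v =>
        simp only [dualExtFun_tmul, LinearMap.add_apply]
        push_cast
        ring
    | add x y hx hy =>
        simp only [map_add, LinearMap.add_apply] at *
        rw [hx, hy]
  map_smul' r α := by
    apply LinearMap.ext; intro x
    induction x using TensorProduct.induction_on with
    | zero => simp
    | tmul w v =>
        simp only [dualExtFun_tmul, RingHom.id_apply, LinearMap.smul_apply,
          LinearMap.smul_apply, smul_eq_mul, Complex.real_smul]
        push_cast
        ring
    | add x y hx hy =>
        simp only [map_add, RingHom.id_apply, LinearMap.smul_apply, smul_eq_mul] at *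
        rw [hx, hy]

/-- The canonical inclusion `𝕋V → 𝕋_ℂV`. -/
def iT : TR V →ₗ[ℝ] TCx V where
  toFun a := (iV a.1, dualExt a.2)
  map_add' a b := by simp [Prod.ext_iff]
  map_smul' r a := by simp [Prod.ext_iff]



/-- Auxiliary ℝ-linear version of the ℂ-bilinear extension of a real bilinear form. -/
def bilinExtAux (B : V →ₗ[ℝ] V →ₗ[ℝ] ℝ) : Cx V →ₗ[ℝ] DualC V :=
  TensorProduct.lift
    (LinearMap.mk₂ ℝ (fun z v => z • dualExt (B v))
      (fun z w v => by simp only [add_smul])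
      (fun r z v => by simp only [smul_assoc])
      (fun z v w => by simp only [map_add, smul_add])
      (fun r z v => by simp only [map_smul]; exact smul_comm z r _))

private lemma bilinExtAux_smulC (B : V →ₗ[ℝ] V →ₗ[ℝ] ℝ) (z : ℂ) (x : Cx V) :
    bilinExtAux B (z • x) = z • bilinExtAux B x := by
  induction x using TensorProduct.induction_on with
  | zero => simp
  | tmul w v =>
      simp only [bilinExtAux, smul_tmul', lift.tmul, LinearMap.mk₂_apply, smul_eq_mul,
        mul_smul]
  | add x y hx hy => simp only [smul_add, map_add, hx, hy]

/-- The ℂ-bilinear extension of a real bilinear form `B : V × V → ℝ` to `V_ℂ`. -/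
def bilinExt (B : V →ₗ[ℝ] V →ₗ[ℝ] ℝ) : Cx V →ₗ[ℂ] DualC V where
  toFun := bilinExtAux B
  map_add' := map_add _
  map_smul' z x := by simpa using bilinExtAux_smulC B z x

/-- The `B`-transformation `e^B(X+ξ) = X + ξ + B̃(X,·)` of `𝕋_ℂV`, for a real `B`. -/
def eB (B : V →ₗ[ℝ] V →ₗ[ℝ] ℝ) : TCx V →ₗ[ℂ] TCx V where
  toFun a := (a.1, a.2 + bilinExt B a.1)
  map_add' a b := by
    simp only [Prod.fst_add, Prod.snd_add, map_add, Prod.mk_add_mk, Prod.mk.injEq]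
    exact ⟨trivial, by abel⟩
  map_smul' z a := by
    simp only [Prod.smul_fst, Prod.smul_snd, map_smul, RingHom.id_apply, Prod.smul_mk,
      Prod.mk.injEq, smul_add]

/-- The real `B`-transformation `e^B(X+α) = X + α + B(X,·)` of `𝕋V`. -/
def eBR (B : V →ₗ[ℝ] V →ₗ[ℝ] ℝ) : TR V →ₗ[ℝ] TR V where
  toFun a := (a.1, a.2 + B a.1)
  map_add' a b := by
    simp only [Prod.fst_add, Prod.snd_add, map_add, Prod.mk_add_mk, Prod.mk.injEq]
    exact ⟨trivial, by abel⟩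
  map_smul' r a := by
    simp only [Prod.smul_fst, Prod.smul_snd, map_smul, RingHom.id_apply, Prod.smul_mk,
      Prod.mk.injEq, smul_add]


/-- The range `E = pr_{V_ℂ}(L)` of a subspace of `𝕋_ℂV`. -/
def Esub (L : Submodule ℂ (TCx V)) : Submodule ℂ (Cx V) :=
  L.map (LinearMap.fst ℂ (Cx V) (DualC V))

/-- The real index `r = dim_ℂ (L ∩ L̄)`. -/
def riL (L : Submodule ℂ (TCx V)) : ℕ := finrank ℂ ↥(L ⊓ conjSub L)

/-- The real part `K = (L ∩ L̄) ∩ 𝕋V`, as a subspace of `𝕋V`. -/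
def Ksub (L : Submodule ℂ (TCx V)) : Submodule ℝ (TR V) :=
  ((L ⊓ conjSub L).restrictScalars ℝ).comap iT

/-- The distribution `D = (E + Ē) ∩ V`, as a subspace of `V`. -/
def Dsub (L : Submodule ℂ (TCx V)) : Submodule ℝ V :=
  ((Esub L ⊔ conjE (Esub L)).restrictScalars ℝ).comap iV

/-- The distribution `Δ = (E ∩ Ē) ∩ V`, as a subspace of `V`. -/
def DeltaSub (L : Submodule ℂ (TCx V)) : Submodule ℝ V :=
  ((Esub L ⊓ conjE (Esub L)).restrictScalars ℝ).comap iV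

/-- The order `s = dim V - dim D`. -/
def orderL (L : Submodule ℂ (TCx V)) : ℕ := finrank ℝ V - finrank ℝ ↥(Dsub L)

/-- The (normalized) type `k = dim_ℂ(E + Ē) - dim_ℂ E`. -/
def typeL (L : Submodule ℂ (TCx V)) : ℕ :=
  finrank ℂ ↥(Esub L ⊔ conjE (Esub L)) - finrank ℂ ↥(Esub L)


end CDirac

/-! An element of `ι^!L ∩ conj(ι^!L)` is `X + ι^*ξ = X + ι^*η` with `ιX + ξ ∈ L` and
`ιX + η ∈ L̄`. The difference `ξ - η` lies in the annihilator of `W_ℂ`, which has dimension `r`,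
and it determines the triple `(X, ξ, η)` because `L ∩ L̄ = 0` and `ι` is injective. -/

namespace CDirac

section Backward

variable {K E F : Type*} [Field K] [AddCommGroup E] [Module K E] [AddCommGroup F] [Module K F]

/-- The backward image `f^!L = {X + f^*ξ : X + ξ ∈ L, X ∈ E}` of `L ⊆ F ⊕ F^*`. -/
def backward (f : E →ₗ[K] F) (L : Submodule K (F × Dual K F)) :
    Submodule K (E × Dual K E) :=
  (L.comap (f.prodMap LinearMap.id)).map (LinearMap.id.prodMap f.dualMap)

lemma mem_backward {f : E →ₗ[K] F} {L : Submodule K (F × Dual K F)} {a : E × Dual K E} :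
    a ∈ backward f L ↔ ∃ X ξ, (f X, ξ) ∈ L ∧ (X, f.dualMap ξ) = a := by
  simp [backward]

/-- Triples `(X, ξ, η)` with `fX + ξ ∈ L`, `fX + η ∈ M` and `f^*ξ = f^*η`. -/
def backwardInfWitnesses (f : E →ₗ[K] F) (L M : Submodule K (F × Dual K F)) :
    Submodule K (E × Dual K F × Dual K F) :=
  L.comap (f.prodMap (LinearMap.fst K _ _)) ⊓ M.comap (f.prodMap (LinearMap.snd K _ _)) ⊓
    (LinearMap.ker f.dualMap).comap ((LinearMap.fst K _ _ - LinearMap.snd K _ _) ∘ₗ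
      LinearMap.snd K _ _)

lemma inf_backward_le_map_backwardInfWitnesses (f : E →ₗ[K] F)
    (L M : Submodule K (F × Dual K F)) :
    backward f L ⊓ backward f M ≤
      (backwardInfWitnesses f L M).map
        (LinearMap.id.prodMap (f.dualMap ∘ₗ LinearMap.fst K _ _)) := by
  rintro a ⟨hL, hM⟩
  obtain ⟨X, ξ, hξ, rfl⟩ := mem_backward.mp hL
  obtain ⟨Y, η, hη, hYη⟩ := mem_backward.mp hM
  obtain ⟨rfl, hdual⟩ := Prod.mk.inj hYη
  refine ⟨(Y, ξ, η), ⟨⟨hξ, hη⟩, ?_⟩, rfl⟩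
  simp [hdual]

lemma injective_sub_restrict_backwardInfWitnesses {f : E →ₗ[K] F} (hf : Function.Injective f)
    {L M : Submodule K (F × Dual K F)} (hLM : L ⊓ M = ⊥) :
    Function.Injective ((LinearMap.fst K _ _ - LinearMap.snd K _ _) ∘ₗ
      LinearMap.snd K _ _ ∘ₗ (backwardInfWitnesses f L M).subtype) := by
  refine (injective_iff_map_eq_zero _).mpr ?_
  intro ⟨⟨X, ξ, η⟩, ⟨⟨hξ, hη⟩, _⟩⟩ hzero
  obtain rfl : ξ = η := sub_eq_zero.mp hzero
  have hmem : (f X, ξ) ∈ L ⊓ M := ⟨hξ, hη⟩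
  rw [hLM, Submodule.mem_bot, Prod.mk_eq_zero] at hmem
  obtain ⟨hX, rfl⟩ := hmem
  simp [(injective_iff_map_eq_zero f).mp hf X hX]

theorem finrank_inf_backward_le [FiniteDimensional K F] {f : E →ₗ[K] F}
    (hf : Function.Injective f) {L M : Submodule K (F × Dual K F)} (hLM : L ⊓ M = ⊥) :
    finrank K ↥(backward f L ⊓ backward f M) ≤ finrank K ↥(LinearMap.ker f.dualMap) := by
  have : FiniteDimensional K E := Module.Finite.of_injective f hf
  set P := backwardInfWitnesses f L M
  set σ := (LinearMap.fst K _ _ - LinearMap.snd K _ _) ∘ₗ LinearMap.snd K _ _ ∘ₗ P.subtype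
  have hσ : LinearMap.range σ ≤ LinearMap.ker f.dualMap := by
    rintro _ ⟨⟨p, hp⟩, rfl⟩
    exact hp.2
  calc finrank K ↥(backward f L ⊓ backward f M)
      _ ≤ finrank K ↥(P.map (LinearMap.id.prodMap (f.dualMap ∘ₗ LinearMap.fst K _ _))) :=
        Submodule.finrank_mono (inf_backward_le_map_backwardInfWitnesses f L M)
      _ ≤ finrank K ↥P := Submodule.finrank_map_le _ _
      _ = finrank K ↥(LinearMap.range σ) :=
        (LinearMap.finrank_range_of_inj (injective_sub_restrict_backwardInfWitnesses hf hLM)).symm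
      _ ≤ finrank K ↥(LinearMap.ker f.dualMap) := Submodule.finrank_mono hσ

theorem finrank_ker_dualMap_add_finrank [FiniteDimensional K F] {f : E →ₗ[K] F}
    (hf : Function.Injective f) :
    finrank K ↥(LinearMap.ker f.dualMap) + finrank K E = finrank K F := by
  rw [LinearMap.ker_dualMap_eq_dualAnnihilator_range, add_comm,
    ← LinearMap.finrank_range_of_inj hf, Subspace.finrank_add_finrank_dualAnnihilator_eq]

end Backward

section Conjugation

variable {V W : Type*} [AddCommGroup V] [Module ℝ V] [AddCommGroup W] [Module ℝ W]

lemma conjCx_tmul (z : ℂ) (v : V) : conjCx (z ⊗ₜ[ℝ] v) = (starRingEnd ℂ z) ⊗ₜ[ℝ] v := by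
  simp [conjCx, Complex.conjAe_coe]

lemma conjCx_conjCx (x : Cx V) : conjCx (conjCx x) = x := by
  induction x using TensorProduct.induction_on with
  | zero => simp
  | tmul z v => simp [conjCx_tmul]
  | add x y hx hy => simp only [map_add, hx, hy]

lemma conjDual_apply (ξ : DualC V) (x : Cx V) :
    conjDual ξ x = starRingEnd ℂ (ξ (conjCx x)) := rfl

lemma conjDual_conjDual (ξ : DualC V) : conjDual (conjDual ξ) = ξ := by
  ext x
  simp [conjDual_apply, conjCx_conjCx]

lemma conjT_conjT (a : TCx V) : conjT (conjT a) = a := by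
  simp [conjT, conjCx_conjCx, conjDual_conjDual]

lemma mem_conjSub_iff {L : Submodule ℂ (TCx V)} {a : TCx V} :
    a ∈ conjSub L ↔ conjT a ∈ L :=
  ⟨by rintro ⟨b, hb, rfl⟩; rwa [conjT_conjT], fun h => ⟨conjT a, h, conjT_conjT a⟩⟩

lemma conjCx_baseChange (f : W →ₗ[ℝ] V) (x : Cx W) :
    conjCx (f.baseChange ℂ x) = f.baseChange ℂ (conjCx x) := by
  induction x using TensorProduct.induction_on with
  | zero => simp
  | tmul z v => simp [conjCx_tmul]
  | add x y hx hy => simp only [map_add, hx, hy]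

lemma conjDual_dualMap_baseChange (f : W →ₗ[ℝ] V) (ξ : DualC V) :
    conjDual ((f.baseChange ℂ).dualMap ξ) = (f.baseChange ℂ).dualMap (conjDual ξ) := by
  ext x
  simp [conjDual_apply, conjCx_tmul]

lemma conjSub_backward_baseChange_le (f : W →ₗ[ℝ] V) (L : Submodule ℂ (TCx V)) :
    conjSub (backward (f.baseChange ℂ) L) ≤ backward (f.baseChange ℂ) (conjSub L) := by
  intro a ha
  obtain ⟨X, ξ, hξ, hXξ⟩ := mem_backward.mp (mem_conjSub_iff.mp ha)
  refine mem_backward.mpr ⟨conjCx X, conjDual ξ, ?_, ?_⟩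
  · rw [mem_conjSub_iff]
    simpa [conjT, conjCx_baseChange, conjCx_conjCx, conjDual_conjDual] using hξ
  · rw [← conjT_conjT a, ← hXξ]
    simp [conjT, conjDual_dualMap_baseChange]

end Conjugation

end CDirac

open CDirac Module

theorem stmt2_general (V : Type*) [AddCommGroup V] [Module ℝ V] [FiniteDimensional ℝ V]
    (L : Submodule ℂ (TCx V)) (hreal : L ⊓ conjSub L = ⊥)
    (W : Submodule ℝ V) (r : ℕ) (hW : finrank ℝ V = finrank ℝ ↥W + r)
    (L' : Submodule ℂ (TCx ↥W))
    (hL' : (L' : Set (TCx ↥W)) =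
      {a : TCx ↥W | ∃ (X : Cx ↥W) (ξ : DualC V),
        a = (X, ξ.comp (LinearMap.baseChange ℂ W.subtype)) ∧
        ((LinearMap.baseChange ℂ W.subtype) X, ξ) ∈ L}) :
    finrank ℂ ↥(L' ⊓ conjSub L') ≤ r := by
  have hι : Function.Injective (W.subtype.baseChange ℂ) :=
    Module.Flat.lTensor_preserves_injective_linearMap _ W.injective_subtype
  obtain rfl : L' = backward (W.subtype.baseChange ℂ) L := by
    ext a
    rw [← SetLike.mem_coe, hL', mem_backward]
    exact ⟨fun ⟨X, ξ, ha, hX⟩ => ⟨X, ξ, hX, ha.symm⟩, fun ⟨X, ξ, hX, ha⟩ => ⟨X, ξ, ha.symm, hX⟩⟩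
  have hdim := finrank_ker_dualMap_add_finrank hι
  rw [finrank_baseChange, finrank_baseChange] at hdim
  calc finrank ℂ ↥(_ ⊓ conjSub _)
      _ ≤ finrank ℂ ↥(backward _ L ⊓ backward _ (conjSub L)) :=
        Submodule.finrank_mono (inf_le_inf_left _ (conjSub_backward_baseChange_le _ L))
      _ ≤ _ := finrank_inf_backward_le hι hreal
      _ = r := by omega

/-- If `L ⊆ 𝕋_ℂV` is lagrangian with `L ∩ L̄ = 0` and `W ⊆ V` has
codimension `r`, then the backward image `ι^!L` under the inclusion `ι : W → V`
satisfies `dim_ℂ(ι^!L ∩ conj(ι^!L)) ≤ r`. -/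
theorem stmt2 (V : Type*) [AddCommGroup V] [Module ℝ V] [FiniteDimensional ℝ V]
    (L : Submodule ℂ (TCx V)) (hL : IsLagrangianC L) (hreal : L ⊓ conjSub L = ⊥)
    (W : Submodule ℝ V) (r : ℕ) (hW : finrank ℝ V = finrank ℝ ↥W + r)
    (L' : Submodule ℂ (TCx ↥W))
    (hL' : (L' : Set (TCx ↥W)) =
      {a : TCx ↥W | ∃ (X : Cx ↥W) (ξ : DualC V),
        a = (X, ξ.comp (LinearMap.baseChange ℂ W.subtype)) ∧
        ((LinearMap.baseChange ℂ W.subtype) X, ξ) ∈ L}) :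
    finrank ℂ ↥(L' ⊓ conjSub L') ≤ r :=
  stmt2_general V L hreal W r hW L' hL'
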